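/- For all elements a, b, c, d, e of a commutative ring, (abcd − 1)² · P₅(a,b,c,d,e) = (e(abcd−1)² − abcd(a + b + c + d) − 2abc − 2abd − 2bcd − 2acd − a − b − c − d)² − 4(ab+1)(ac+1)(ad+1)(bc+1)(bd+1)(cd+1). -/
import Mathlib


/-- The regular Diophantine quintuple polynomial. -/
def P5 {R : Type*} [CommRing R] (a b c d e : R) : R :=
  (a*b*c*d*e)^2 - 2*(a*b*c*d*e)*(a+b+c+d+e) + a^2 + b^2 + c^2 + d^2 + e^2
    - 4*(a*b*c*d + a*b*c*e + a*b*d*e + a*c*d*e + b*c*d*e)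
    - 2*(a*b + a*c + a*d + a*e + b*c + b*d + b*e + c*d + c*e + d*e) - 4

theorem P5_identity_nine {R : Type*} [CommRing R] (a b c d e : R) :
    (a*b*c*d - 1)^2 * P5 a b c d e =
      (e*(a*b*c*d - 1)^2 - a*b*c*d*(a + b + c + d)
          - 2*a*b*c - 2*a*b*d - 2*b*c*d - 2*a*c*d - a - b - c - d)^2
        - 4*(a*b+1)*(a*c+1)*(a*d+1)*(b*c+1)*(b*d+1)*(c*d+1) := by
  unfold P5; ring
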